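/- Composition of exact embezzlement protocols (finite part of Proposition 4.1). Let A and B be unital complex star algebras and s a unital linear functional on A ⊗ B. For each i = 0, …, n let C_i and D_i be unital complex star algebras, let g_i be a unital linear functional on C_i ⊗ D_i, and let Φ_{A,i} : A ⊗ C_i → A and Φ_{B,i} : B ⊗ D_i → B be star-algebra isomorphisms such that s ∘ (Φ_{A,i} ⊗ Φ_{B,i}) ∘ σ_i = s ⊗ g_i, where σ_i : A ⊗ B ⊗ C_i ⊗ D_i ≅ (A ⊗ C_i) ⊗ (B ⊗ D_i) is the canonical reordering isomorphism. Then there exist star-algebra isomorphisms Φ_A : A ⊗ (C_0 ⊗ ⋯ ⊗ C_n) → A and Φ_B : B ⊗ (D_0 ⊗ ⋯ ⊗ D_n) → B such that s ∘ (Φ_A ⊗ Φ_B) ∘ σ = s ⊗ g_0 ⊗ ⋯ ⊗ g_n, where σ is the canonical reordering isomorphism of A ⊗ B ⊗ (C_0 ⊗ ⋯ ⊗ C_n) ⊗ (D_0 ⊗ ⋯ ⊗ D_n) onto (A ⊗ C_0 ⊗ ⋯ ⊗ C_n) ⊗ (B ⊗ D_0 ⊗ ⋯ ⊗ D_n), and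 s ⊗ g_0 ⊗ ⋯ ⊗ g_n is the linear functional sending a ⊗ b ⊗ c_0 ⊗ d_0 ⊗ ⋯ ⊗ c_n ⊗ d_n (after reordering) to s(a ⊗ b) g_0(c_0 ⊗ d_0) ⋯ g_n(c_n ⊗ d_n). -/

import Mathlib

open TensorProduct

section StarTensor

variable {A B : Type*} [Ring A] [Ring B] [Algebra ℂ A] [Algebra ℂ B]
  [StarRing A] [StarRing B] [StarModule ℂ A] [StarModule ℂ B]

/-- The star operation on the algebraic tensor product, determined by
`(a ⊗ b)* = a* ⊗ b*`. -/
noncomputable def tensorStar : A ⊗[ℂ] B →+ A ⊗[ℂ] B :=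
  TensorProduct.liftAddHom
    { toFun := fun a =>
        { toFun := fun b => star a ⊗ₜ[ℂ] star b
          map_zero' := by simp
          map_add' := fun b b' => by simp [star_add, TensorProduct.tmul_add] }
      map_zero' := by ext b; simp
      map_add' := fun a a' => by ext b; simp [star_add, TensorProduct.add_tmul] }
    (fun c a b => by
      simp [star_smul, TensorProduct.smul_tmul', TensorProduct.tmul_smul])

@[simp] lemma tensorStar_tmul (a : A) (b : B) :
    tensorStar (a ⊗ₜ[ℂ] b) = star a ⊗ₜ[ℂ] star b := by
  simp [tensorStar]

lemma tensorStar_involutive : ∀ x : A ⊗[ℂ] B, tensorStar (tensorStar x) = x := fun x => by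
  induction x with
  | zero => simp
  | tmul a b => simp
  | add x y hx hy => simp only [map_add, hx, hy]

lemma tensorStar_mul : ∀ x y : A ⊗[ℂ] B, tensorStar (x * y) = tensorStar y * tensorStar x := by
  intro x y
  induction x with
  | zero => simp
  | tmul a b =>
      induction y with
      | zero => simp
      | tmul c d => simp [Algebra.TensorProduct.tmul_mul_tmul]
      | add y z hy hz => simp only [add_mul, mul_add, map_add, hy, hz]
  | add x x' hx hx' => simp only [add_mul, mul_add, map_add, hx, hx']

noncomputable instance TensorProduct.instStarRing' : StarRing (A ⊗[ℂ] B) where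
  star := tensorStar
  star_involutive := tensorStar_involutive
  star_mul := tensorStar_mul
  star_add := map_add tensorStar

noncomputable instance TensorProduct.instStarModule' :
    @StarModule ℂ (A ⊗[ℂ] B) _ TensorProduct.instStarRing'.toStarMul.toInvolutiveStar.toStar _ where
  star_smul := fun c x => by
    show tensorStar (c • x) = star c • tensorStar x
    induction x with
    | zero => simp
    | tmul a b => simp [TensorProduct.smul_tmul', star_smul]
    | add x y hx hy => simp only [smul_add, map_add, hx, hy]

@[simp] lemma TensorProduct.star_tmul' (a : A) (b : B) :
    star (a ⊗ₜ[ℂ] b) = star a ⊗ₜ[ℂ] star b :=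
  tensorStar_tmul a b

end StarTensor

/-- The tensor product `f ⊗ g` of two linear functionals, acting by
`(f ⊗ g)(a ⊗ b) = f a * g b`. -/
noncomputable def tensorFun {A B : Type*} [AddCommMonoid A] [AddCommMonoid B]
    [Module ℂ A] [Module ℂ B] (f : A →ₗ[ℂ] ℂ) (g : B →ₗ[ℂ] ℂ) :
    A ⊗[ℂ] B →ₗ[ℂ] ℂ :=
  (TensorProduct.lid ℂ ℂ).toLinearMap ∘ₗ TensorProduct.map f g

@[simp] lemma tensorFun_tmul {A B : Type*} [AddCommMonoid A] [AddCommMonoid B]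
    [Module ℂ A] [Module ℂ B] (f : A →ₗ[ℂ] ℂ) (g : B →ₗ[ℂ] ℂ) (a : A) (b : B) :
    tensorFun f g (a ⊗ₜ[ℂ] b) = f a * g b := by
  simp [tensorFun]

universe u v

/-- A bundled unital complex star algebra: an associative unital ℂ-algebra equipped with a
conjugate-linear involutive anti-automorphism `star`. -/
structure StarAlgCat : Type (u + 1) where
  /-- the underlying type -/
  carrier : Type u
  [ring : Ring carrier]
  [algebra : Algebra ℂ carrier]
  [starRing : StarRing carrier]
  [starModule : StarModule ℂ carrier]

attribute [instance] StarAlgCat.ring StarAlgCat.algebra StarAlgCat.starRing StarAlgCat.starModule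

/-- The tensor product of two bundled star algebras, with star given by
`(a ⊗ b)* = a* ⊗ b*`. -/
noncomputable def StarAlgCat.tens (X : StarAlgCat.{u}) (Y : StarAlgCat.{v}) :
    StarAlgCat.{max u v} :=
  StarAlgCat.mk (X.carrier ⊗[ℂ] Y.carrier)

/-- The iterated tensor product `C 0 ⊗ C 1 ⊗ ⋯ ⊗ C n` of a finite family of star algebras,
associated to the left. -/
noncomputable def StarAlgCat.tpow : (n : ℕ) → (Fin (n + 1) → StarAlgCat.{u}) → StarAlgCat.{u}
  | 0, C => C 0
  | n + 1, C => (StarAlgCat.tpow n (fun i => C i.castSucc)).tens (C (Fin.last (n + 1)))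

/-- The combined functional `g_0 ⊗ ⋯ ⊗ g_n`, viewed via the canonical reordering as a linear
functional on `(C_0 ⊗ ⋯ ⊗ C_n) ⊗ (D_0 ⊗ ⋯ ⊗ D_n)`; it sends (the reordering of)
`c_0 ⊗ d_0 ⊗ ⋯ ⊗ c_n ⊗ d_n` to `g_0 (c_0 ⊗ d_0) ⋯ g_n (c_n ⊗ d_n)`. -/
noncomputable def funTens :
    (n : ℕ) → (C : Fin (n + 1) → StarAlgCat.{u}) → (D : Fin (n + 1) → StarAlgCat.{v}) →
    (∀ i, ((C i).carrier ⊗[ℂ] (D i).carrier) →ₗ[ℂ] ℂ) →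
    (((StarAlgCat.tpow n C).carrier ⊗[ℂ] (StarAlgCat.tpow n D).carrier) →ₗ[ℂ] ℂ)
  | 0, _, _, g => g 0
  | n + 1, C, D, g =>
      (tensorFun (funTens n (fun i => C i.castSucc) (fun i => D i.castSucc)
          (fun i => g i.castSucc)) (g (Fin.last (n + 1)))) ∘ₗ
        (TensorProduct.tensorTensorTensorComm ℂ
          (StarAlgCat.tpow n fun i => C i.castSucc).carrier (C (Fin.last (n + 1))).carrier
          (StarAlgCat.tpow n fun i => D i.castSucc).carrier
          (D (Fin.last (n + 1))).carrier).toLinearMap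

section Helpers

variable {X Y Z W : Type*} [Ring X] [Ring Y] [Ring Z] [Ring W]
  [Algebra ℂ X] [Algebra ℂ Y] [Algebra ℂ Z] [Algebra ℂ W]
  [StarRing X] [StarRing Y] [StarRing Z] [StarRing W]
  [StarModule ℂ X] [StarModule ℂ Y] [StarModule ℂ Z] [StarModule ℂ W]

/-- Upgrade an algebra equivalence commuting with `star` to a star-algebra equivalence. -/
noncomputable def algEquivToStar (e : X ≃ₐ[ℂ] Y) (h : ∀ x, e (star x) = star (e x)) :
    X ≃⋆ₐ[ℂ] Y :=
  { e.toRingEquiv with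
    map_star' := h
    map_smul' := fun r x => map_smul e r x }

@[simp] lemma algEquivToStar_apply (e : X ≃ₐ[ℂ] Y) (h : ∀ x, e (star x) = star (e x)) (x : X) :
    algEquivToStar e h x = e x := rfl

/-- Downgrade a star-algebra equivalence to an algebra equivalence. -/
noncomputable def starToAlgEquiv (e : X ≃⋆ₐ[ℂ] Y) : X ≃ₐ[ℂ] Y :=
  AlgEquiv.ofRingEquiv (f := e.toRingEquiv) (fun r => by
    have : (algebraMap ℂ X r) = r • (1 : X) := Algebra.algebraMap_eq_smul_one r
    rw [this]
    show e.toRingEquiv (r • (1 : X)) = algebraMap ℂ Y r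
    rw [show (e.toRingEquiv : X → Y) = (e : X → Y) from rfl]
    rw [map_smul e, map_one e, Algebra.algebraMap_eq_smul_one])

@[simp] lemma starToAlgEquiv_apply (e : X ≃⋆ₐ[ℂ] Y) (x : X) :
    starToAlgEquiv e x = e x := rfl

/-- The associator, as a star-algebra equivalence. -/
noncomputable def starAssocSymm :
    (X ⊗[ℂ] (Y ⊗[ℂ] Z)) ≃⋆ₐ[ℂ] ((X ⊗[ℂ] Y) ⊗[ℂ] Z) :=
  algEquivToStar (Algebra.TensorProduct.assoc ℂ ℂ ℂ X Y Z).symm (fun x => by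
    induction x with
    | zero => erw [star_zero, map_zero, star_zero]
    | add a b ha hb => erw [star_add, map_add, ha, hb, map_add, star_add]; rfl
    | tmul a yz =>
        induction yz with
        | zero => erw [TensorProduct.tmul_zero, star_zero, map_zero, star_zero]
        | add a' b' ha hb =>
            erw [TensorProduct.tmul_add, star_add, map_add, ha, hb, map_add, star_add]; rfl
        | tmul y z =>
            erw [TensorProduct.star_tmul', TensorProduct.star_tmul',
              Algebra.TensorProduct.assoc_symm_tmul, Algebra.TensorProduct.assoc_symm_tmul,
              TensorProduct.star_tmul', TensorProduct.star_tmul'])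

@[simp] lemma starAssocSymm_tmul (x : X) (y : Y) (z : Z) :
    (starAssocSymm (x ⊗ₜ[ℂ] (y ⊗ₜ[ℂ] z)) : (X ⊗[ℂ] Y) ⊗[ℂ] Z) = (x ⊗ₜ[ℂ] y) ⊗ₜ[ℂ] z := by
  rfl

/-- Tensor product of star-algebra equivalences. -/
noncomputable def starCongr (e : X ≃⋆ₐ[ℂ] Y) (f : Z ≃⋆ₐ[ℂ] W) :
    (X ⊗[ℂ] Z) ≃⋆ₐ[ℂ] (Y ⊗[ℂ] W) :=
  algEquivToStar (Algebra.TensorProduct.congr (starToAlgEquiv e) (starToAlgEquiv f)) (fun x => by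
    induction x with
    | zero => erw [star_zero, map_zero, star_zero]
    | add a b ha hb => erw [star_add, map_add, map_add, star_add, ha, hb]; rfl
    | tmul a b =>
        erw [TensorProduct.star_tmul', TensorProduct.star_tmul']
        simp only [Algebra.TensorProduct.congr_apply,
          Algebra.TensorProduct.map_tmul]
        simp [map_star])

@[simp] lemma starCongr_tmul (e : X ≃⋆ₐ[ℂ] Y) (f : Z ≃⋆ₐ[ℂ] W) (x : X) (z : Z) :
    (starCongr e f (x ⊗ₜ[ℂ] z) : Y ⊗[ℂ] W) = e x ⊗ₜ[ℂ] f z := by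
  rfl

end Helpers

set_option maxHeartbeats 1000000
set_option synthInstance.maxHeartbeats 400000

/-- **Composition of exact embezzlement protocols** (finite part of Proposition 4.1).
If a catalyst functional `s` on `A ⊗ B` can exactly embezzle each of the states `g_0, …, g_n`
via star-algebra isomorphisms `Φ_{A,i} : A ⊗ C_i ≃ A` and `Φ_{B,i} : B ⊗ D_i ≃ B`, then it can
embezzle the combined state `g_0 ⊗ ⋯ ⊗ g_n` via star-algebra isomorphisms
`Φ_A : A ⊗ (C_0 ⊗ ⋯ ⊗ C_n) ≃ A` and `Φ_B : B ⊗ (D_0 ⊗ ⋯ ⊗ D_n) ≃ B`. -/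
theorem embezzlement_composition (A : StarAlgCat.{u}) (B : StarAlgCat.{u})
    (s : (A.carrier ⊗[ℂ] B.carrier) →ₗ[ℂ] ℂ) (hs : s 1 = 1)
    (n : ℕ) (C D : Fin (n + 1) → StarAlgCat.{u})
    (g : ∀ i, ((C i).carrier ⊗[ℂ] (D i).carrier) →ₗ[ℂ] ℂ)
    (hg : ∀ i, g i 1 = 1)
    (ΦA : ∀ i, (A.carrier ⊗[ℂ] (C i).carrier) ≃⋆ₐ[ℂ] A.carrier)
    (ΦB : ∀ i, (B.carrier ⊗[ℂ] (D i).carrier) ≃⋆ₐ[ℂ] B.carrier)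
    (hemb : ∀ i, ∀ X : (A.carrier ⊗[ℂ] B.carrier) ⊗[ℂ] ((C i).carrier ⊗[ℂ] (D i).carrier),
      s (Algebra.TensorProduct.map (AlgHomClass.toAlgHom (ΦA i)) (AlgHomClass.toAlgHom (ΦB i))
          (Algebra.TensorProduct.tensorTensorTensorComm ℂ ℂ ℂ ℂ A.carrier B.carrier
            (C i).carrier (D i).carrier X)) = tensorFun s (g i) X) :
    ∃ (ΨA : (A.carrier ⊗[ℂ] (StarAlgCat.tpow n C).carrier) ≃⋆ₐ[ℂ] A.carrier)
      (ΨB : (B.carrier ⊗[ℂ] (StarAlgCat.tpow n D).carrier) ≃⋆ₐ[ℂ] B.carrier),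
      ∀ X : (A.carrier ⊗[ℂ] B.carrier) ⊗[ℂ]
          ((StarAlgCat.tpow n C).carrier ⊗[ℂ] (StarAlgCat.tpow n D).carrier),
        s (Algebra.TensorProduct.map (AlgHomClass.toAlgHom ΨA) (AlgHomClass.toAlgHom ΨB)
            (Algebra.TensorProduct.tensorTensorTensorComm ℂ ℂ ℂ ℂ A.carrier B.carrier
              (StarAlgCat.tpow n C).carrier (StarAlgCat.tpow n D).carrier X))
          = tensorFun s (funTens n C D g) X := by
  induction n with
  | zero =>
      exact ⟨ΦA 0, ΦB 0, hemb 0⟩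
  | succ n ih =>
      obtain ⟨ΨA', ΨB', hΨ⟩ := ih (fun i => C i.castSucc) (fun i => D i.castSucc)
        (fun i => g i.castSucc) (fun i => hg i.castSucc) (fun i => ΦA i.castSucc)
        (fun i => ΦB i.castSucc) (fun i => hemb i.castSucc)
      set l := Fin.last (n + 1)
      letI TC := (StarAlgCat.tpow n fun i => C i.castSucc).carrier
      letI TD := (StarAlgCat.tpow n fun i => D i.castSucc).carrier
      refine ⟨((starAssocSymm (X := A.carrier) (Y := TC) (Z := (C l).carrier)).trans
          ((starCongr ΨA' (StarAlgEquiv.refl (R := ℂ) (A := (C l).carrier))).trans (ΦA l)) :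
            (A.carrier ⊗[ℂ] (TC ⊗[ℂ] (C l).carrier)) ≃⋆ₐ[ℂ] A.carrier),
        ((starAssocSymm (X := B.carrier) (Y := TD) (Z := (D l).carrier)).trans
          ((starCongr ΨB' (StarAlgEquiv.refl (R := ℂ) (A := (D l).carrier))).trans (ΦB l)) :
            (B.carrier ⊗[ℂ] (TD ⊗[ℂ] (D l).carrier)) ≃⋆ₐ[ℂ] B.carrier), ?_⟩
      intro X
      induction X with
      | zero => simp only [map_zero]
      | add x y hx hy => simp only [map_add, hx, hy]
      | tmul ab pq =>
          induction ab with
          | zero => simp only [TensorProduct.zero_tmul, TensorProduct.tmul_zero, map_zero]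
          | add x y hx hy =>
                  simp only [TensorProduct.add_tmul, TensorProduct.tmul_add, map_add, hx, hy]
          | tmul a b =>
              induction pq with
              | zero => simp only [TensorProduct.zero_tmul, TensorProduct.tmul_zero, map_zero]
              | add x y hx hy =>
                  simp only [TensorProduct.add_tmul, TensorProduct.tmul_add, map_add, hx, hy]
              | tmul tc ud =>
                  change TC ⊗[ℂ] (C l).carrier at tc
                  change TD ⊗[ℂ] (D l).carrier at ud
                  induction tc with
                  | zero => erw [TensorProduct.zero_tmul]; simp only [TensorProduct.zero_tmul, TensorProduct.tmul_zero, map_zero]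
                  | add x y hx hy =>
                      erw [TensorProduct.add_tmul]; simp only [TensorProduct.add_tmul, TensorProduct.tmul_add, map_add, hx, hy]
                  | tmul t c =>
                      induction ud with
                      | zero => erw [TensorProduct.tmul_zero]; simp only [TensorProduct.zero_tmul, TensorProduct.tmul_zero, map_zero]
                      | add x y hx hy =>
                      erw [TensorProduct.tmul_add]; simp only [TensorProduct.add_tmul, TensorProduct.tmul_add, map_add, hx, hy]
                      | tmul u d =>
                          have key := hemb l ((ΨA' (a ⊗ₜ[ℂ] t) ⊗ₜ[ℂ] ΨB' (b ⊗ₜ[ℂ] u)) ⊗ₜ[ℂ]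
                            (c ⊗ₜ[ℂ] d))
                          have key2 := hΨ ((a ⊗ₜ[ℂ] b) ⊗ₜ[ℂ] (t ⊗ₜ[ℂ] u))
                          simp only [Algebra.TensorProduct.tensorTensorTensorComm_tmul,
                            Algebra.TensorProduct.map_tmul,                            AlgHom.coe_coe, tensorFun_tmul] at key key2 ⊢
                          show s ((ΦA l) ((starCongr ΨA' (StarAlgEquiv.refl ℂ _))
                              (starAssocSymm (a ⊗ₜ[ℂ] (t ⊗ₜ[ℂ] c)))) ⊗ₜ[ℂ]
                            (ΦB l) ((starCongr ΨB' (StarAlgEquiv.refl ℂ _))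
                              (starAssocSymm (b ⊗ₜ[ℂ] (u ⊗ₜ[ℂ] d))))) = _
                          erw [starAssocSymm_tmul, starAssocSymm_tmul, starCongr_tmul,
                            starCongr_tmul]
                          simp only [StarAlgEquiv.coe_refl, id_eq]
                          erw [key, key2]
                          show _ = s (a ⊗ₜ[ℂ] b) *
                            funTens (n + 1) C D g ((t ⊗ₜ[ℂ] c) ⊗ₜ[ℂ] (u ⊗ₜ[ℂ] d))
                          simp only [funTens, LinearMap.coe_comp, Function.comp_apply,
                            LinearEquiv.coe_coe]
                          erw [LinearMap.comp_apply, LinearEquiv.coe_coe, TensorProduct.tensorTensorTensorComm_tmul, tensorFun_tmul]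
                          ring
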